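/- arXiv:1412.6662 — 2 statements merged into one kernel-verified Lean document; each statement's English description precedes it below -/
import Mathlib

section
/- Let M be a Garside monoid (a cancellative atomic monoid satisfying the LCM condition and possessing a fundamental element). Then there exists a unique fundamental element Δ̂ such that every fundamental element of M is left-divisible and right-divisible by Δ̂; i.e., the subsemigroup F(M) of fundamental elements is singly generated as a two-sided ideal of QZ(M). -/
/-- An atom of a monoid: a non-identity element that is indecomposable. -/
def IsMonAtom {M : Type*} [Monoid M] (a : M) : Prop :=
  a ≠ 1 ∧ ∀ b c : M, a = b * c → b = 1 ∨ c = 1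

/-- A monoid is atomic if it carries a norm `ν` with `ν α = 0 ↔ α = 1` and
`ν (αβ) ≥ ν α + ν β`. -/
def IsAtomicMonoid (M : Type*) [Monoid M] : Prop :=
  ∃ ν : M → ℕ, (∀ a : M, ν a = 0 ↔ a = 1) ∧ ∀ a b : M, ν a + ν b ≤ ν (a * b)

/-- Cancellation condition: `a * x * b = a * y * b` implies `x = y`. -/
def IsCancellative (M : Type*) [Monoid M] : Prop :=
  ∀ a b x y : M, a * x * b = a * y * b → x = y

/-- The monoid is generated by its atoms. -/
def GeneratedByAtoms (M : Type*) [Monoid M] : Prop :=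
  Submonoid.closure {a : M | IsMonAtom a} = ⊤

/-- Quasi-central element: `s·Δ = Δ·σ(s)` for a permutation `σ` of the atoms. -/
def IsQuasiCentral {M : Type*} [Monoid M] (Δ : M) : Prop :=
  ∃ σ : {a : M // IsMonAtom a} ≃ {a : M // IsMonAtom a},
    ∀ s : {a : M // IsMonAtom a}, (s : M) * Δ = Δ * (σ s : M)

/-- Fundamental element: there is a permutation `σ` of the atoms such that for every
atom `s` one has `Δ = s·Δ_s = Δ_s·σ(s)` for some `Δ_s`. -/
def IsFundamental {M : Type*} [Monoid M] (Δ : M) : Prop :=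
  ∃ σ : {a : M // IsMonAtom a} ≃ {a : M // IsMonAtom a},
    ∀ s : {a : M // IsMonAtom a}, ∃ d : M, Δ = (s : M) * d ∧ Δ = d * (σ s : M)


/-- `m` is a right least common multiple of `u` and `v`. -/
def IsRightLcm {M : Type*} [Monoid M] (u v m : M) : Prop :=
  (∃ w, m = u * w) ∧ (∃ w, m = v * w) ∧
    ∀ m' : M, (∃ w, m' = u * w) → (∃ w, m' = v * w) → ∃ w, m' = m * w

/-- `m` is a left least common multiple of `u` and `v`. -/
def IsLeftLcm {M : Type*} [Monoid M] (u v m : M) : Prop :=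
  (∃ w, m = w * u) ∧ (∃ w, m = w * v) ∧
    ∀ m' : M, (∃ w, m' = w * u) → (∃ w, m' = w * v) → ∃ w, m' = w * m

/-- `d` is a left greatest common divisor of `u` and `v`. -/
def IsLeftGcd {M : Type*} [Monoid M] (u v d : M) : Prop :=
  (∃ w, u = d * w) ∧ (∃ w, v = d * w) ∧
    ∀ d' : M, (∃ w, u = d' * w) → (∃ w, v = d' * w) → ∃ w, d = d' * w

/-- `d` is a right greatest common divisor of `u` and `v`. -/
def IsRightGcd {M : Type*} [Monoid M] (u v d : M) : Prop :=
  (∃ w, u = w * d) ∧ (∃ w, v = w * d) ∧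
    ∀ d' : M, (∃ w, u = w * d') → (∃ w, v = w * d') → ∃ w, d = w * d'



/-!
Fundamental elements are quasi-central, so each of them has the same left and right divisors.
Hence the left gcd `g` of two fundamental elements is also their right gcd, and the lcm conditions
push every atom through `g`: `s * g = g * t` with `t` again an atom, and conversely. So `g` is
fundamental, and a fundamental element `Δ̂` minimal for left divisibility (it exists because the
monoid is atomic) equals its left gcd with any fundamental `Δ`, i.e. left-divides `Δ`.
-/

section Garside

variable {M : Type*} [Monoid M]

theorem IsCancellative.isCancelMul (hcan : IsCancellative M) : IsCancelMul M where
  mul_left_cancel a b c h := hcan a 1 b c (by simpa only [mul_one] using h)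
  mul_right_cancel a b c h := hcan 1 a b c (by simpa only [one_mul] using h)

theorem IsAtomicMonoid.exists_minimal_leftDvd (hat : IsAtomicMonoid M) {P : M → Prop}
    (hP : ∃ x, P x) : ∃ x, P x ∧ ∀ y w, P y → x = y * w → y = x := by
  classical
  obtain ⟨ν, hν0, hνadd⟩ := hat
  have hn : ∃ n, ∃ x, P x ∧ ν x = n := let ⟨x, hx⟩ := hP; ⟨ν x, x, hx, rfl⟩
  obtain ⟨x, hx, hxn⟩ := Nat.find_spec hn
  refine ⟨x, hx, fun y w hy hxy => ?_⟩
  have hyx : ν x ≤ ν y := hxn ▸ Nat.find_min' hn ⟨y, hy, rfl⟩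
  have hw : w = 1 := (hν0 w).mp (by have := hνadd y w; rw [← hxy] at this; omega)
  rw [hxy, hw, mul_one]

theorem exists_isLeftGcd (hat : IsAtomicMonoid M) (hlcm : ∀ u v : M, ∃ m, IsRightLcm u v m)
    (u v : M) : ∃ d, IsLeftGcd u v d := by
  classical
  obtain ⟨ν, hν0, hνadd⟩ := hat
  let P : ℕ → Prop := fun n => ∃ d, (∃ w, u = d * w) ∧ (∃ w, v = d * w) ∧ ν d = n
  obtain ⟨d, hdu, hdv, hd⟩ := Nat.findGreatest_spec (P := P) (Nat.zero_le (ν u))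
    ⟨1, ⟨u, (one_mul u).symm⟩, ⟨v, (one_mul v).symm⟩, (hν0 1).mpr rfl⟩
  refine ⟨d, hdu, hdv, fun d' hd'u hd'v => ?_⟩
  -- the right lcm `m` of `d` and `d'` is again a common left divisor, so maximality forces `m = d`
  obtain ⟨m, ⟨k, hk⟩, hd'm, hm⟩ := hlcm d d'
  obtain ⟨wu, hwu⟩ := hm u hdu hd'u
  have hmu : ν m ≤ ν u := by have := hνadd m wu; rw [← hwu] at this; omega
  have hmd : ν m ≤ ν d := hd ▸ Nat.le_findGreatest hmu ⟨m, ⟨wu, hwu⟩, hm v hdv hd'v, rfl⟩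
  have hk1 : k = 1 := (hν0 k).mp (by have := hνadd d k; rw [← hk] at this; omega)
  rw [hk1, mul_one] at hk
  exact hk ▸ hd'm

theorem exists_isRightGcd (hat : IsAtomicMonoid M) (hlcm : ∀ u v : M, ∃ m, IsLeftLcm u v m)
    (u v : M) : ∃ d, IsRightGcd u v d := by
  classical
  obtain ⟨ν, hν0, hνadd⟩ := hat
  let P : ℕ → Prop := fun n => ∃ d, (∃ w, u = w * d) ∧ (∃ w, v = w * d) ∧ ν d = n
  obtain ⟨d, hdu, hdv, hd⟩ := Nat.findGreatest_spec (P := P) (Nat.zero_le (ν u))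
    ⟨1, ⟨u, (mul_one u).symm⟩, ⟨v, (mul_one v).symm⟩, (hν0 1).mpr rfl⟩
  refine ⟨d, hdu, hdv, fun d' hd'u hd'v => ?_⟩
  obtain ⟨m, ⟨k, hk⟩, hd'm, hm⟩ := hlcm d d'
  obtain ⟨wu, hwu⟩ := hm u hdu hd'u
  have hmu : ν m ≤ ν u := by have := hνadd wu m; rw [← hwu] at this; omega
  have hmd : ν m ≤ ν d := hd ▸ Nat.le_findGreatest hmu ⟨m, ⟨wu, hwu⟩, hm v hdv hd'v, rfl⟩
  have hk1 : k = 1 := (hν0 k).mp (by have := hνadd k d; rw [← hk] at this; omega)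
  rw [hk1, one_mul] at hk
  exact hk ▸ hd'm

theorem exists_mul_eq_mul_of_forall_atom (hgen : GeneratedByAtoms M) {g : M}
    (h : ∀ s, IsMonAtom s → ∃ t, s * g = g * t) (x : M) : ∃ y, x * g = g * y := by
  have hx : x ∈ Submonoid.closure {a : M | IsMonAtom a} := hgen ▸ Submonoid.mem_top x
  induction hx using Submonoid.closure_induction with
  | mem s hs => exact h s hs
  | one => exact ⟨1, by rw [one_mul, mul_one]⟩
  | mul x y _ _ hx hy =>
    obtain ⟨x', hx'⟩ := hx
    obtain ⟨y', hy'⟩ := hy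
    exact ⟨x' * y', by rw [mul_assoc, hy', ← mul_assoc, hx', mul_assoc]⟩

theorem exists_mul_eq_mul_of_forall_atom' (hgen : GeneratedByAtoms M) {g : M}
    (h : ∀ t, IsMonAtom t → ∃ s, s * g = g * t) (y : M) : ∃ x, x * g = g * y := by
  have hy : y ∈ Submonoid.closure {a : M | IsMonAtom a} := hgen ▸ Submonoid.mem_top y
  induction hy using Submonoid.closure_induction with
  | mem t ht => exact h t ht
  | one => exact ⟨1, by rw [one_mul, mul_one]⟩
  | mul x y _ _ hx hy =>
    obtain ⟨x', hx'⟩ := hx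
    obtain ⟨y', hy'⟩ := hy
    exact ⟨x' * y', by rw [mul_assoc, hy', ← mul_assoc, hx', mul_assoc]⟩

theorem IsFundamental.isQuasiCentral {Δ : M} (hΔ : IsFundamental Δ) : IsQuasiCentral Δ := by
  obtain ⟨σ, hσ⟩ := hΔ
  refine ⟨σ, fun s => ?_⟩
  obtain ⟨d, hsd, hdσ⟩ := hσ s
  calc (s : M) * Δ = s * (d * σ s) := by rw [← hdσ]
    _ = Δ * σ s := by rw [← mul_assoc, ← hsd]

theorem IsFundamental.exists_eq_atom_mul {Δ s : M} (hΔ : IsFundamental Δ) (hs : IsMonAtom s) :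
    ∃ d, Δ = s * d := by
  obtain ⟨σ, hσ⟩ := hΔ
  obtain ⟨d, hd, -⟩ := hσ ⟨s, hs⟩
  exact ⟨d, hd⟩

namespace IsQuasiCentral

variable {Δ : M}

theorem exists_mul_eq_mul (hgen : GeneratedByAtoms M) (hΔ : IsQuasiCentral Δ) (x : M) :
    ∃ y, x * Δ = Δ * y := by
  obtain ⟨σ, hσ⟩ := hΔ
  exact exists_mul_eq_mul_of_forall_atom hgen (fun s hs => ⟨σ ⟨s, hs⟩, hσ ⟨s, hs⟩⟩) x

theorem exists_mul_eq_mul' (hgen : GeneratedByAtoms M) (hΔ : IsQuasiCentral Δ) (y : M) :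
    ∃ x, x * Δ = Δ * y := by
  obtain ⟨σ, hσ⟩ := hΔ
  refine exists_mul_eq_mul_of_forall_atom' hgen (fun t ht => ⟨σ.symm ⟨t, ht⟩, ?_⟩) y
  simpa only [Equiv.apply_symm_apply] using hσ (σ.symm ⟨t, ht⟩)

theorem leftDvd_iff_rightDvd [IsCancelMul M] (hgen : GeneratedByAtoms M)
    (hΔ : IsQuasiCentral Δ) (x : M) : (∃ y, Δ = x * y) ↔ ∃ z, Δ = z * x := by
  constructor
  · rintro ⟨y, h⟩
    obtain ⟨z, hz⟩ := hΔ.exists_mul_eq_mul' hgen y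
    exact ⟨z, mul_right_cancel (b := y) (by rw [mul_assoc, ← h, hz])⟩
  · rintro ⟨z, h⟩
    obtain ⟨y, hy⟩ := hΔ.exists_mul_eq_mul hgen z
    exact ⟨y, mul_left_cancel (a := z) (by rw [← mul_assoc, ← h, hy])⟩

end IsQuasiCentral

theorem IsLeftGcd.exists_mul_eq_mul [IsLeftCancelMul M]
    (hlcm : ∀ u v : M, ∃ m, IsRightLcm u v m) {Δ₁ Δ₂ g s : M} (hg : IsLeftGcd Δ₁ Δ₂ g)
    (h₁ : ∃ t, s * Δ₁ = Δ₁ * t) (h₂ : ∃ t, s * Δ₂ = Δ₂ * t) : ∃ t, s * g = g * t := by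
  obtain ⟨m, ⟨b, hb⟩, ⟨a, ha⟩, hm⟩ := hlcm g s
  -- the lcm `m = s * a` left-divides `s * Δᵢ = Δᵢ * tᵢ`, so `a` left-divides each `Δᵢ`
  have hdvd : ∀ Δ, (∃ w, Δ = g * w) → (∃ t, s * Δ = Δ * t) → ∃ w, Δ = a * w := by
    rintro Δ ⟨u, hu⟩ ⟨t, ht⟩
    obtain ⟨w, hw⟩ := hm (s * Δ) ⟨u * t, by rw [ht, hu, mul_assoc]⟩ ⟨Δ, rfl⟩
    exact ⟨w, mul_left_cancel (a := s) (by rw [← mul_assoc, ← ha, hw])⟩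
  obtain ⟨e, he⟩ := hg.2.2 a (hdvd Δ₁ hg.1 h₁) (hdvd Δ₂ hg.2.1 h₂)
  refine ⟨b * e, ?_⟩
  calc s * g = s * (a * e) := by rw [← he]
    _ = m * e := by rw [ha, mul_assoc]
    _ = g * (b * e) := by rw [hb, mul_assoc]

theorem IsRightGcd.exists_mul_eq_mul [IsRightCancelMul M]
    (hlcm : ∀ u v : M, ∃ m, IsLeftLcm u v m) {Δ₁ Δ₂ g t : M} (hg : IsRightGcd Δ₁ Δ₂ g)
    (h₁ : ∃ s, s * Δ₁ = Δ₁ * t) (h₂ : ∃ s, s * Δ₂ = Δ₂ * t) : ∃ s, s * g = g * t := by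
  obtain ⟨m, ⟨b, hb⟩, ⟨a, ha⟩, hm⟩ := hlcm g t
  have hdvd : ∀ Δ, (∃ w, Δ = w * g) → (∃ s, s * Δ = Δ * t) → ∃ w, Δ = w * a := by
    rintro Δ ⟨u, hu⟩ ⟨s, hs⟩
    obtain ⟨w, hw⟩ := hm (Δ * t) ⟨s * u, by rw [← hs, hu, mul_assoc]⟩ ⟨Δ, rfl⟩
    exact ⟨w, mul_right_cancel (b := t) (by rw [mul_assoc, ← ha, hw])⟩
  obtain ⟨e, he⟩ := hg.2.2 a (hdvd Δ₁ hg.1 h₁) (hdvd Δ₂ hg.2.1 h₂)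
  refine ⟨e * b, ?_⟩
  calc e * b * g = e * m := by rw [mul_assoc, ← hb]
    _ = e * a * t := by rw [ha, mul_assoc]
    _ = g * t := by rw [← he]

theorem isMonAtom_of_mul_eq_mul [IsCancelMul M] {g s t : M}
    (hg : ∀ y, ∃ x, x * g = g * y) (hs : IsMonAtom s) (h : s * g = g * t) : IsMonAtom t := by
  refine ⟨fun ht => hs.1 (mul_right_cancel (b := g) (by rw [h, ht, mul_one, one_mul])),
    fun a b hab => ?_⟩
  obtain ⟨a', ha⟩ := hg a
  obtain ⟨b', hb⟩ := hg b
  have hsab : s = a' * b' := mul_right_cancel (b := g) <| by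
    rw [h, hab, ← mul_assoc, ← ha, mul_assoc, ← hb, mul_assoc]
  refine (hs.2 a' b' hsab).imp (fun ha' => ?_) (fun hb' => ?_)
  · exact mul_left_cancel (a := g) (by rw [← ha, ha', one_mul, mul_one])
  · exact mul_left_cancel (a := g) (by rw [← hb, hb', one_mul, mul_one])

theorem isMonAtom_of_mul_eq_mul' [IsCancelMul M] {g s t : M}
    (hg : ∀ x, ∃ y, x * g = g * y) (ht : IsMonAtom t) (h : s * g = g * t) : IsMonAtom s := by
  refine ⟨fun hs => ht.1 (mul_left_cancel (a := g) (by rw [← h, hs, one_mul, mul_one])),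
    fun a b hab => ?_⟩
  obtain ⟨a', ha⟩ := hg a
  obtain ⟨b', hb⟩ := hg b
  have htab : t = a' * b' := mul_left_cancel (a := g) <| by
    rw [← h, hab, mul_assoc, hb, ← mul_assoc, ha, mul_assoc]
  refine (ht.2 a' b' htab).imp (fun ha' => ?_) (fun hb' => ?_)
  · exact mul_right_cancel (b := g) (by rw [ha, ha', one_mul, mul_one])
  · exact mul_right_cancel (b := g) (by rw [hb, hb', one_mul, mul_one])

theorem isFundamental_of_forall_atom [IsCancelMul M] (hgen : GeneratedByAtoms M) {g : M}
    (hdvd : ∀ s, IsMonAtom s → ∃ h, g = s * h)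
    (hl : ∀ s, IsMonAtom s → ∃ t, s * g = g * t) (hr : ∀ t, IsMonAtom t → ∃ s, s * g = g * t) :
    IsFundamental g := by
  have hl' := exists_mul_eq_mul_of_forall_atom hgen hl
  have hr' := exists_mul_eq_mul_of_forall_atom' hgen hr
  choose f hf using hl
  choose f' hf' using hr
  let σ : {a : M // IsMonAtom a} ≃ {a : M // IsMonAtom a} :=
    { toFun := fun s => ⟨f s s.2, isMonAtom_of_mul_eq_mul hr' s.2 (hf s s.2)⟩
      invFun := fun t => ⟨f' t t.2, isMonAtom_of_mul_eq_mul' hl' t.2 (hf' t t.2)⟩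
      left_inv := fun s => Subtype.ext (mul_right_cancel (b := g) (by rw [hf', ← hf]))
      right_inv := fun t => Subtype.ext (mul_left_cancel (a := g) (by rw [← hf, hf'])) }
  refine ⟨σ, fun s => ?_⟩
  obtain ⟨d, hd⟩ := hdvd s s.2
  exact ⟨d, hd, mul_left_cancel (a := (s : M)) (by rw [← mul_assoc, ← hd]; exact hf s s.2)⟩

theorem IsLeftGcd.isRightGcd [IsCancelMul M] (hat : IsAtomicMonoid M)
    (hgen : GeneratedByAtoms M) (hlcm : ∀ u v : M, ∃ m, IsLeftLcm u v m) {Δ₁ Δ₂ g : M}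
    (h₁ : IsQuasiCentral Δ₁) (h₂ : IsQuasiCentral Δ₂) (hg : IsLeftGcd Δ₁ Δ₂ g) :
    IsRightGcd Δ₁ Δ₂ g := by
  obtain ⟨g', hg'⟩ := exists_isRightGcd hat hlcm Δ₁ Δ₂
  obtain ⟨a, ha⟩ := hg.2.2 g' ((h₁.leftDvd_iff_rightDvd hgen g').2 hg'.1)
    ((h₂.leftDvd_iff_rightDvd hgen g').2 hg'.2.1)
  obtain ⟨b, hb⟩ := hg'.2.2 g ((h₁.leftDvd_iff_rightDvd hgen g).1 hg.1)
    ((h₂.leftDvd_iff_rightDvd hgen g).1 hg.2.1)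
  have hbga : g = b * g * a := by rw [← hb, ← ha]
  have ha1 : a = 1 := by
    obtain ⟨ν, hν0, hνadd⟩ := hat
    have hν₁ := hνadd (b * g) a
    have hν₂ := hνadd b g
    rw [← hbga] at hν₁
    exact (hν0 a).mp (by omega)
  rwa [ha, ha1, mul_one]

theorem IsLeftGcd.isFundamental [IsCancelMul M] (hat : IsAtomicMonoid M)
    (hgen : GeneratedByAtoms M)
    (hlcm : ∀ u v : M, (∃ m, IsRightLcm u v m) ∧ (∃ m, IsLeftLcm u v m)) {Δ₁ Δ₂ g : M}
    (h₁ : IsFundamental Δ₁) (h₂ : IsFundamental Δ₂) (hg : IsLeftGcd Δ₁ Δ₂ g) :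
    IsFundamental g := by
  have hq₁ := h₁.isQuasiCentral
  have hq₂ := h₂.isQuasiCentral
  have hrlcm : ∀ u v : M, ∃ m, IsRightLcm u v m := fun u v => (hlcm u v).1
  have hllcm : ∀ u v : M, ∃ m, IsLeftLcm u v m := fun u v => (hlcm u v).2
  have hg' := hg.isRightGcd hat hgen hllcm hq₁ hq₂
  refine isFundamental_of_forall_atom hgen
    (fun s hs => hg.2.2 s (h₁.exists_eq_atom_mul hs) (h₂.exists_eq_atom_mul hs))
    (fun s _ => hg.exists_mul_eq_mul hrlcm (hq₁.exists_mul_eq_mul hgen s)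
      (hq₂.exists_mul_eq_mul hgen s))
    (fun t _ => hg'.exists_mul_eq_mul hllcm (hq₁.exists_mul_eq_mul' hgen t)
      (hq₂.exists_mul_eq_mul' hgen t))

end Garside

/-- In a Garside monoid there is a unique fundamental element dividing every fundamental
element from the left and from the right: the semigroup of fundamental elements is
singly generated. -/
theorem stmt_8 {M : Type*} [Monoid M] (hcan : IsCancellative M) (hat : IsAtomicMonoid M)
    (hgen : GeneratedByAtoms M)
    (hlcm : ∀ u v : M, (∃ m, IsRightLcm u v m) ∧ (∃ m, IsLeftLcm u v m))
    (hF : ∃ Δ : M, IsFundamental Δ) :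
    ∃! Δhat : M, IsFundamental Δhat ∧
      ∀ Δ : M, IsFundamental Δ → (∃ w, Δ = Δhat * w) ∧ (∃ w, Δ = w * Δhat) := by
  have := hcan.isCancelMul
  obtain ⟨Δhat, hΔhat, hmin⟩ := hat.exists_minimal_leftDvd hF
  have hdvd : ∀ Δ, IsFundamental Δ → ∃ w, Δ = Δhat * w := by
    intro Δ hΔ
    obtain ⟨g, hg⟩ := exists_isLeftGcd hat (fun u v => (hlcm u v).1) Δhat Δ
    obtain ⟨w, hw⟩ := hg.1
    have hgΔhat : g = Δhat := hmin g w (hg.isFundamental hat hgen hlcm hΔhat hΔ) hw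
    exact hgΔhat ▸ hg.2.1
  refine ⟨Δhat, ⟨hΔhat, fun Δ hΔ => ⟨hdvd Δ hΔ, ?_⟩⟩, ?_⟩
  · exact (hΔ.isQuasiCentral.leftDvd_iff_rightDvd hgen Δhat).1 (hdvd Δ hΔ)
  · rintro Δ ⟨hΔ, hΔdvd⟩
    obtain ⟨w, hw⟩ := (hΔdvd Δhat hΔhat).1
    exact hmin Δ w hΔ hw
end

section
/- In a Garside monoid M, if Δ₁ and Δ₂ are quasi-central elements, then their left greatest common divisor equals their right greatest common divisor, and this common GCD is a quasi-central element. -/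
section Aux
variable {M : Type*} [Monoid M]

theorem aux_lcan (hcan : IsCancellative M) {a x y : M} (h : a * x = a * y) : x = y :=
  hcan a 1 x y (by simpa using h)

theorem aux_rcan (hcan : IsCancellative M) {b x y : M} (h : x * b = y * b) : x = y :=
  hcan 1 b x y (by simpa using h)

theorem aux_unit {ν : M → ℕ} (hν0 : ∀ a : M, ν a = 0 ↔ a = 1)
    (hνadd : ∀ a b : M, ν a + ν b ≤ ν (a * b)) {a b : M} (h : a * b = 1) :
    a = 1 ∧ b = 1 := by
  have h1 : ν (a * b) = 0 := by rw [h]; exact (hν0 1).mpr rfl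
  have h2 := hνadd a b
  exact ⟨(hν0 a).mp (by omega), (hν0 b).mp (by omega)⟩

theorem qc_comm (hgen : GeneratedByAtoms M) {Δ : M} (h : IsQuasiCentral Δ) (x : M) :
    ∃ y, x * Δ = Δ * y := by
  obtain ⟨σ, hσ⟩ := h
  have hx : x ∈ Submonoid.closure {a : M | IsMonAtom a} := by rw [hgen]; trivial
  induction hx using Submonoid.closure_induction with
  | mem a ha => exact ⟨σ ⟨a, ha⟩, hσ ⟨a, ha⟩⟩
  | one => exact ⟨1, by simp⟩
  | mul a b _ _ iha ihb =>
    obtain ⟨ya, hya⟩ := iha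
    obtain ⟨yb, hyb⟩ := ihb
    exact ⟨ya * yb, by rw [mul_assoc, hyb, ← mul_assoc, hya, mul_assoc]⟩

theorem qc_comm' (hgen : GeneratedByAtoms M) {Δ : M} (h : IsQuasiCentral Δ) (x : M) :
    ∃ y, Δ * x = y * Δ := by
  obtain ⟨σ, hσ⟩ := h
  have hx : x ∈ Submonoid.closure {a : M | IsMonAtom a} := by rw [hgen]; trivial
  induction hx using Submonoid.closure_induction with
  | mem a ha =>
    refine ⟨σ.symm ⟨a, ha⟩, ?_⟩
    have := hσ (σ.symm ⟨a, ha⟩)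
    rw [Equiv.apply_symm_apply] at this
    exact this.symm
  | one => exact ⟨1, by simp⟩
  | mul a b _ _ iha ihb =>
    obtain ⟨ya, hya⟩ := iha
    obtain ⟨yb, hyb⟩ := ihb
    exact ⟨ya * yb, by rw [← mul_assoc, hya, mul_assoc, hyb, ← mul_assoc]⟩

theorem qc_ldvd_rdvd (hcan : IsCancellative M) (hgen : GeneratedByAtoms M) {Δ : M}
    (hΔ : IsQuasiCentral Δ) {x : M} (h : ∃ w, Δ = x * w) : ∃ w, Δ = w * x := by
  obtain ⟨w, hw⟩ := h
  obtain ⟨x0, hx0⟩ := qc_comm' hgen hΔ x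
  obtain ⟨w0, hw0⟩ := qc_comm' hgen hΔ w
  have h1 : Δ * Δ = (x0 * w0) * Δ := by
    calc Δ * Δ = Δ * (x * w) := by rw [← hw]
    _ = (Δ * x) * w := by rw [mul_assoc]
    _ = x0 * (Δ * w) := by rw [hx0, mul_assoc]
    _ = (x0 * w0) * Δ := by rw [hw0, ← mul_assoc]
  have h2 : Δ = x0 * w0 := aux_rcan hcan h1
  have h3 : x0 * Δ = x0 * (w0 * x) := by
    calc x0 * Δ = Δ * x := hx0.symm
    _ = (x0 * w0) * x := by rw [h2]
    _ = x0 * (w0 * x) := by rw [mul_assoc]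
  exact ⟨w0, aux_lcan hcan h3⟩

theorem qc_rdvd_ldvd (hcan : IsCancellative M) (hgen : GeneratedByAtoms M) {Δ : M}
    (hΔ : IsQuasiCentral Δ) {x : M} (h : ∃ w, Δ = w * x) : ∃ w, Δ = x * w := by
  obtain ⟨w, hw⟩ := h
  obtain ⟨x1, hx1⟩ := qc_comm hgen hΔ x
  obtain ⟨w1, hw1⟩ := qc_comm hgen hΔ w
  have h1 : Δ * Δ = Δ * (w1 * x1) := by
    calc Δ * Δ = (w * x) * Δ := by rw [← hw]
    _ = w * (x * Δ) := by rw [mul_assoc]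
    _ = (w * Δ) * x1 := by rw [hx1, mul_assoc]
    _ = Δ * (w1 * x1) := by rw [hw1, mul_assoc]
  have h2 : Δ = w1 * x1 := aux_lcan hcan h1
  have h3 : Δ * x1 = (x * w1) * x1 := by
    calc Δ * x1 = x * Δ := hx1.symm
    _ = x * (w1 * x1) := by rw [h2]
    _ = (x * w1) * x1 := by rw [mul_assoc]
  exact ⟨w1, aux_rcan hcan h3⟩

theorem exists_leftGcd (hcan : IsCancellative M) {ν : M → ℕ}
    (hν0 : ∀ a : M, ν a = 0 ↔ a = 1) (hνadd : ∀ a b : M, ν a + ν b ≤ ν (a * b))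
    (hlcm : ∀ u v : M, ∃ m, IsRightLcm u v m) (u v : M) :
    ∃ d, IsLeftGcd u v d := by
  classical
  set P : ℕ → Prop := fun n => ∃ d : M, (∃ w, u = d * w) ∧ (∃ w, v = d * w) ∧ ν d = n with hP
  have hbound : ∀ n, P n → n ≤ ν u := by
    rintro n ⟨d, ⟨w, hw⟩, -, hn⟩
    calc n = ν d := hn.symm
    _ ≤ ν d + ν w := Nat.le_add_right _ _
    _ ≤ ν (d * w) := hνadd _ _
    _ = ν u := by rw [hw]
  have h0 : P 0 := ⟨1, ⟨u, (one_mul u).symm⟩, ⟨v, (one_mul v).symm⟩, (hν0 1).mpr rfl⟩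
  obtain ⟨d, hdu, hdv, hdn⟩ : P (Nat.findGreatest P (ν u)) :=
    Nat.findGreatest_spec (Nat.zero_le _) h0
  refine ⟨d, hdu, hdv, ?_⟩
  rintro d' ⟨a, ha⟩ ⟨b, hb⟩
  obtain ⟨m, ⟨c, hc⟩, ⟨c', hc'⟩, hmin⟩ := hlcm d d'
  obtain ⟨w1, hw1⟩ := hmin u hdu ⟨a, ha⟩
  obtain ⟨w2, hw2⟩ := hmin v hdv ⟨b, hb⟩
  have hm : P (ν m) := ⟨m, ⟨w1, hw1⟩, ⟨w2, hw2⟩, rfl⟩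
  have hle : ν m ≤ Nat.findGreatest P (ν u) := Nat.le_findGreatest (hbound _ hm) hm
  have h2 : ν d + ν c ≤ ν m := by rw [hc]; exact hνadd _ _
  have hc1 : c = 1 := (hν0 c).mp (by omega)
  rw [hc1, mul_one] at hc
  exact ⟨c', by rw [← hc, hc']⟩

theorem exists_rightGcd (hcan : IsCancellative M) {ν : M → ℕ}
    (hν0 : ∀ a : M, ν a = 0 ↔ a = 1) (hνadd : ∀ a b : M, ν a + ν b ≤ ν (a * b))
    (hlcm : ∀ u v : M, ∃ m, IsLeftLcm u v m) (u v : M) :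
    ∃ d, IsRightGcd u v d := by
  classical
  set P : ℕ → Prop := fun n => ∃ d : M, (∃ w, u = w * d) ∧ (∃ w, v = w * d) ∧ ν d = n with hP
  have hbound : ∀ n, P n → n ≤ ν u := by
    rintro n ⟨d, ⟨w, hw⟩, -, hn⟩
    calc n = ν d := hn.symm
    _ ≤ ν w + ν d := Nat.le_add_left _ _
    _ ≤ ν (w * d) := hνadd _ _
    _ = ν u := by rw [hw]
  have h0 : P 0 := ⟨1, ⟨u, (mul_one u).symm⟩, ⟨v, (mul_one v).symm⟩, (hν0 1).mpr rfl⟩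
  obtain ⟨d, hdu, hdv, hdn⟩ : P (Nat.findGreatest P (ν u)) :=
    Nat.findGreatest_spec (Nat.zero_le _) h0
  refine ⟨d, hdu, hdv, ?_⟩
  rintro d' ⟨a, ha⟩ ⟨b, hb⟩
  obtain ⟨m, ⟨c, hc⟩, ⟨c', hc'⟩, hmin⟩ := hlcm d d'
  obtain ⟨w1, hw1⟩ := hmin u hdu ⟨a, ha⟩
  obtain ⟨w2, hw2⟩ := hmin v hdv ⟨b, hb⟩
  have hm : P (ν m) := ⟨m, ⟨w1, hw1⟩, ⟨w2, hw2⟩, rfl⟩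
  have hle : ν m ≤ Nat.findGreatest P (ν u) := Nat.le_findGreatest (hbound _ hm) hm
  have h2 : ν c + ν d ≤ ν m := by rw [hc]; exact hνadd _ _
  have hc1 : c = 1 := (hν0 c).mp (by omega)
  rw [hc1, one_mul] at hc
  exact ⟨c', by rw [← hc, hc']⟩


theorem isLeftGcd_mulLeft (hcan : IsCancellative M) {ν : M → ℕ}
    (hν0 : ∀ a : M, ν a = 0 ↔ a = 1) (hνadd : ∀ a b : M, ν a + ν b ≤ ν (a * b))
    (hlcm : ∀ u v : M, ∃ m, IsRightLcm u v m) {u v d : M} (hd : IsLeftGcd u v d) (s : M) :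
    IsLeftGcd (s * u) (s * v) (s * d) := by
  obtain ⟨g, hg⟩ := exists_leftGcd hcan hν0 hνadd hlcm (s * u) (s * v)
  obtain ⟨e, he⟩ : ∃ e, g = s * e := hg.2.2 s ⟨u, rfl⟩ ⟨v, rfl⟩
  obtain ⟨k, hk⟩ := hg.1
  obtain ⟨k', hk'⟩ := hg.2.1
  have heu : u = e * k := by
    refine aux_lcan hcan (a := s) ?_
    rw [← mul_assoc, ← he, ← hk]
  have hev : v = e * k' := by
    refine aux_lcan hcan (a := s) ?_
    rw [← mul_assoc, ← he, ← hk']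
  obtain ⟨w, hw⟩ := hd.2.2 e ⟨k, heu⟩ ⟨k', hev⟩
  obtain ⟨a, ha⟩ := hd.1
  obtain ⟨b, hb⟩ := hd.2.1
  obtain ⟨c, hc⟩ := hg.2.2 (s * d) ⟨a, by rw [ha, ← mul_assoc]⟩ ⟨b, by rw [hb, ← mul_assoc]⟩
  have hedc : e = d * c := by
    refine aux_lcan hcan (a := s) ?_
    rw [← he, hc, mul_assoc]
  have h5 : d * 1 = d * (c * w) := by
    rw [mul_one, ← mul_assoc, ← hedc, ← hw]
  have hcw : c * w = 1 := (aux_lcan hcan h5).symm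
  obtain ⟨hc1, -⟩ := aux_unit hν0 hνadd hcw
  have hgd : g = s * d := by rw [hc, hc1, mul_one]
  refine ⟨⟨a, by rw [ha, ← mul_assoc]⟩, ⟨b, by rw [hb, ← mul_assoc]⟩, ?_⟩
  intro d' h1 h2
  obtain ⟨w', hw'⟩ := hg.2.2 d' h1 h2
  exact ⟨w', by rw [← hgd, hw']⟩

theorem isRightGcd_mulRight (hcan : IsCancellative M) {ν : M → ℕ}
    (hν0 : ∀ a : M, ν a = 0 ↔ a = 1) (hνadd : ∀ a b : M, ν a + ν b ≤ ν (a * b))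
    (hlcm : ∀ u v : M, ∃ m, IsLeftLcm u v m) {u v d : M} (hd : IsRightGcd u v d) (s : M) :
    IsRightGcd (u * s) (v * s) (d * s) := by
  obtain ⟨g, hg⟩ := exists_rightGcd hcan hν0 hνadd hlcm (u * s) (v * s)
  obtain ⟨e, he⟩ : ∃ e, g = e * s := hg.2.2 s ⟨u, rfl⟩ ⟨v, rfl⟩
  obtain ⟨k, hk⟩ := hg.1
  obtain ⟨k', hk'⟩ := hg.2.1
  have heu : u = k * e := by
    refine aux_rcan hcan (b := s) ?_
    rw [mul_assoc, ← he, ← hk]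
  have hev : v = k' * e := by
    refine aux_rcan hcan (b := s) ?_
    rw [mul_assoc, ← he, ← hk']
  obtain ⟨w, hw⟩ := hd.2.2 e ⟨k, heu⟩ ⟨k', hev⟩
  obtain ⟨a, ha⟩ := hd.1
  obtain ⟨b, hb⟩ := hd.2.1
  obtain ⟨c, hc⟩ := hg.2.2 (d * s) ⟨a, by rw [ha, mul_assoc]⟩ ⟨b, by rw [hb, mul_assoc]⟩
  have hedc : e = c * d := by
    refine aux_rcan hcan (b := s) ?_
    rw [← he, hc, ← mul_assoc]
  have h5 : 1 * d = (w * c) * d := by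
    rw [one_mul, mul_assoc, ← hedc, ← hw]
  have hcw : w * c = 1 := (aux_rcan hcan h5).symm
  obtain ⟨-, hc1⟩ := aux_unit hν0 hνadd hcw
  have hgd : g = d * s := by rw [hc, hc1, one_mul]
  refine ⟨⟨a, by rw [ha, mul_assoc]⟩, ⟨b, by rw [hb, mul_assoc]⟩, ?_⟩
  intro d' h1 h2
  obtain ⟨w', hw'⟩ := hg.2.2 d' h1 h2
  exact ⟨w', by rw [← hgd, hw']⟩

end Aux

/-- In a Garside monoid, the left and right greatest common divisors of two
quasi-central elements coincide and are quasi-central. -/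
theorem stmt_10 {M : Type*} [Monoid M] (hcan : IsCancellative M) (hat : IsAtomicMonoid M)
    (hgen : GeneratedByAtoms M)
    (hlcm : ∀ u v : M, (∃ m, IsRightLcm u v m) ∧ (∃ m, IsLeftLcm u v m))
    (hF : ∃ Δ : M, IsFundamental Δ)
    (Δ₁ Δ₂ : M) (h₁ : IsQuasiCentral Δ₁) (h₂ : IsQuasiCentral Δ₂) :
    ∃ d : M, IsLeftGcd Δ₁ Δ₂ d ∧ IsRightGcd Δ₁ Δ₂ d ∧ IsQuasiCentral d := by
  classical
  obtain ⟨ν, hν0, hνadd⟩ := hat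
  have hrlcm : ∀ u v : M, ∃ m, IsRightLcm u v m := fun u v => (hlcm u v).1
  have hllcm : ∀ u v : M, ∃ m, IsLeftLcm u v m := fun u v => (hlcm u v).2
  obtain ⟨d, hd⟩ := exists_leftGcd hcan hν0 hνadd hrlcm Δ₁ Δ₂
  obtain ⟨e, he⟩ := exists_rightGcd hcan hν0 hνadd hllcm Δ₁ Δ₂
  -- d = e
  have hde : e = d := by
    obtain ⟨w, hw⟩ : ∃ w, e = w * d :=
      he.2.2 d (qc_ldvd_rdvd hcan hgen h₁ hd.1) (qc_ldvd_rdvd hcan hgen h₂ hd.2.1)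
    obtain ⟨w', hw'⟩ : ∃ w', d = e * w' :=
      hd.2.2 e (qc_rdvd_ldvd hcan hgen h₁ he.1) (qc_rdvd_ldvd hcan hgen h₂ he.2.1)
    have hcomb : d = w * d * w' := by rw [← hw, ← hw']
    have hn1 : ν (w * d) + ν w' ≤ ν (w * d * w') := hνadd _ _
    have hn2 : ν w + ν d ≤ ν (w * d) := hνadd _ _
    have hn3 : ν (w * d * w') = ν d := by rw [← hcomb]
    have hw1 : w = 1 := (hν0 w).mp (by omega)
    rw [hw1, one_mul] at hw
    exact hw
  rw [hde] at he
  -- commuting elements through d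
  have fwd : ∀ x : M, ∃ y, x * d = d * y := by
    intro x
    obtain ⟨y₁, hy₁⟩ := qc_comm hgen h₁ x
    obtain ⟨y₂, hy₂⟩ := qc_comm hgen h₂ x
    have hg : IsLeftGcd (x * Δ₁) (x * Δ₂) (x * d) :=
      isLeftGcd_mulLeft hcan hν0 hνadd hrlcm hd x
    obtain ⟨a, ha⟩ := hd.1
    obtain ⟨b, hb⟩ := hd.2.1
    exact hg.2.2 d ⟨a * y₁, by rw [hy₁, ha, mul_assoc]⟩
      ⟨b * y₂, by rw [hy₂, hb, mul_assoc]⟩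
  have bwd : ∀ x : M, ∃ y, d * x = y * d := by
    intro x
    obtain ⟨y₁, hy₁⟩ := qc_comm' hgen h₁ x
    obtain ⟨y₂, hy₂⟩ := qc_comm' hgen h₂ x
    have hg : IsRightGcd (Δ₁ * x) (Δ₂ * x) (d * x) :=
      isRightGcd_mulRight hcan hν0 hνadd hllcm he x
    obtain ⟨a, ha⟩ := he.1
    obtain ⟨b, hb⟩ := he.2.1
    exact hg.2.2 d ⟨y₁ * a, by rw [hy₁, ha, mul_assoc]⟩
      ⟨y₂ * b, by rw [hy₂, hb, mul_assoc]⟩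
  -- atom transport
  have atom_fwd : ∀ s : M, IsMonAtom s → ∃ t, IsMonAtom t ∧ s * d = d * t := by
    intro s hs
    obtain ⟨t, ht⟩ := fwd s
    refine ⟨t, ⟨?_, ?_⟩, ht⟩
    · intro h1
      rw [h1, mul_one] at ht
      exact hs.1 (aux_rcan hcan (b := d) (by rw [one_mul, ht]))
    · intro b c hbc
      obtain ⟨b', hb'⟩ := bwd b
      obtain ⟨c', hc'⟩ := bwd c
      have hs2 : s * d = (b' * c') * d := by
        calc s * d = d * (b * c) := by rw [ht, hbc]
        _ = (d * b) * c := by rw [mul_assoc]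
        _ = b' * (d * c) := by rw [hb', mul_assoc]
        _ = (b' * c') * d := by rw [hc', ← mul_assoc]
      have := hs.2 b' c' (aux_rcan hcan hs2)
      rcases this with h1 | h1
      · left
        rw [h1, one_mul] at hb'
        exact aux_lcan hcan (a := d) (by rw [hb', mul_one])
      · right
        rw [h1, one_mul] at hc'
        exact aux_lcan hcan (a := d) (by rw [hc', mul_one])
  have atom_bwd : ∀ t : M, IsMonAtom t → ∃ s, IsMonAtom s ∧ d * t = s * d := by
    intro t ht
    obtain ⟨s, hs⟩ := bwd t
    refine ⟨s, ⟨?_, ?_⟩, hs⟩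
    · intro h1
      rw [h1, one_mul] at hs
      exact ht.1 (aux_lcan hcan (a := d) (by rw [hs, mul_one]))
    · intro b c hbc
      obtain ⟨b', hb'⟩ := fwd b
      obtain ⟨c', hc'⟩ := fwd c
      have ht2 : d * t = d * (b' * c') := by
        calc d * t = (b * c) * d := by rw [hs, hbc]
        _ = b * (c * d) := by rw [mul_assoc]
        _ = (b * d) * c' := by rw [hc', mul_assoc]
        _ = d * (b' * c') := by rw [hb', mul_assoc]
      have := ht.2 b' c' (aux_lcan hcan ht2)
      rcases this with h1 | h1
      · left
        rw [h1, mul_one] at hb'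
        exact aux_rcan hcan (b := d) (by rw [one_mul, hb'])
      · right
        rw [h1, mul_one] at hc'
        exact aux_rcan hcan (b := d) (by rw [one_mul, hc'])
  choose F hFatom hFeq using atom_fwd
  choose G hGatom hGeq using atom_bwd
  refine ⟨d, hd, he, ?_⟩
  refine ⟨⟨fun s => ⟨F s.1 s.2, hFatom s.1 s.2⟩, fun t => ⟨G t.1 t.2, hGatom t.1 t.2⟩,
    ?_, ?_⟩, fun s => hFeq s.1 s.2⟩
  · intro s
    apply Subtype.ext
    have h1 : d * (F s.1 s.2) = G (F s.1 s.2) (hFatom s.1 s.2) * d := hGeq _ _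
    have h2 : s.1 * d = d * (F s.1 s.2) := hFeq _ _
    exact aux_rcan hcan (b := d) (by rw [h1.symm, ← h2])
  · intro t
    apply Subtype.ext
    have h1 : G t.1 t.2 * d = d * F (G t.1 t.2) (hGatom t.1 t.2) := hFeq _ _
    have h2 : d * t.1 = G t.1 t.2 * d := hGeq _ _
    exact aux_lcan hcan (a := d) (by rw [← h1, ← h2])
end
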